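/- For any two-qubit state ρ and any observables A, B of the form n⃗·σ⃗ with n⃗ in the x–z plane (i.e., real linear combinations of σ_x and σ_z with unit coefficient vector), Tr[(σ_y⊗σ_y)ρ(σ_y⊗σ_y)(A⊗B)] = Tr[ρ(A⊗B)]; consequently the state (1/2)[ρ + (σ_y⊗σ_y)ρ(σ_y⊗σ_y)] has the same α-CHSH value as ρ for any measurements in the x–z plane. -/

import Mathlib

open Matrix Kronecker Complex Real ComplexOrder

/-- 2×2 complex matrices (one qubit). -/
abbrev M2 := Matrix (Fin 2) (Fin 2) ℂ
/-- 4×4 complex matrices (two qubits), indexed by `Fin 2 × Fin 2`. -/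
abbrev M4 := Matrix (Fin 2 × Fin 2) (Fin 2 × Fin 2) ℂ

noncomputable def σx : M2 := !![0, 1; 1, 0]
noncomputable def σy : M2 := !![0, -Complex.I; Complex.I, 0]
noncomputable def σz : M2 := !![1, 0; 0, -1]

/-- A ±1-valued qubit observable: Hermitian involution. -/
def IsObs (A : M2) : Prop := A.IsHermitian ∧ A * A = 1

/-- A two-qubit density operator. -/
def IsState (ρ : M4) : Prop := ρ.PosSemidef ∧ ρ.trace = 1

/-- The α-CHSH Bell operator. -/
noncomputable def Sop (α : ℝ) (A0 A1 B0 B1 : M2) : M4 :=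
  (α : ℂ) • (A0 ⊗ₖ B0 + A0 ⊗ₖ B1) + A1 ⊗ₖ B0 - A1 ⊗ₖ B1

/-- The α-CHSH Bell value of a state with given observables. -/
noncomputable def BellValue (ρ : M4) (α : ℝ) (A0 A1 B0 B1 : M2) : ℂ :=
  (ρ * Sop α A0 A1 B0 B1).trace

/-- Computational basis vectors of ℂ²⊗ℂ². -/
def ket (i j : Fin 2) : Fin 2 × Fin 2 → ℂ := fun p => if p = (i, j) then 1 else 0

noncomputable def PhiP : Fin 2 × Fin 2 → ℂ := ((Real.sqrt 2 : ℂ))⁻¹ • (ket 0 0 + ket 1 1)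
noncomputable def PhiM : Fin 2 × Fin 2 → ℂ := ((Real.sqrt 2 : ℂ))⁻¹ • (ket 0 0 - ket 1 1)
noncomputable def PsiP : Fin 2 × Fin 2 → ℂ := ((Real.sqrt 2 : ℂ))⁻¹ • (ket 0 1 + ket 1 0)
noncomputable def PsiM : Fin 2 × Fin 2 → ℂ := ((Real.sqrt 2 : ℂ))⁻¹ • (ket 0 1 - ket 1 0)

/-- Rank-one projector |v⟩⟨v|. -/
noncomputable def proj (v : Fin 2 × Fin 2 → ℂ) : M4 := Matrix.vecMulVec v (star v)

/-- Bell-diagonal two-qubit state. -/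
noncomputable def BellDiag (l1 l2 l3 l4 : ℝ) : M4 :=
  (l1 : ℂ) • proj PhiP + (l2 : ℂ) • proj PhiM + (l3 : ℂ) • proj PsiP + (l4 : ℂ) • proj PsiM

noncomputable def YY : M4 := σy ⊗ₖ σy

attribute [local instance] Classical.propDecidable

/-- The square root of a positive semidefinite matrix (the former `Matrix.PosSemidef.sqrt`). -/
noncomputable def Matrix.PosSemidef.sqrt {ρ : M4} (hρ : ρ.PosSemidef) : M4 :=
  (hρ.1.eigenvectorUnitary : M4) * diagonal ((↑) ∘ Real.sqrt ∘ hρ.1.eigenvalues) *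
    (star hρ.1.eigenvectorUnitary : M4)

/-- Concurrence of a two-qubit state: `max {0, μ₁ − μ₂ − μ₃ − μ₄}` where the `μᵢ` are the
decreasingly ordered square roots of the eigenvalues of `√ρ (σy⊗σy) ρ* (σy⊗σy) √ρ`
(for the decreasingly ordered values, `μ₁ − μ₂ − μ₃ − μ₄ = 2 max μᵢ − ∑ μᵢ`). -/
noncomputable def concurrence (ρ : M4) : ℝ :=
  if hρ : ρ.PosSemidef then
    if hX : (hρ.sqrt * (YY * ρ.map (starRingEnd ℂ) * YY) * hρ.sqrt).IsHermitian then
      let μ : Fin 2 × Fin 2 → ℝ := fun p => Real.sqrt (hX.eigenvalues p)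
      max 0 (2 * (Finset.univ.sup' Finset.univ_nonempty μ) - ∑ p, μ p)
    else 0
  else 0

/-- A ±1-valued observable in the x–z plane of the Bloch sphere. -/
noncomputable def xzObs (γ : ℝ) : M2 := (Real.cos γ : ℂ) • σx + (Real.sin γ : ℂ) • σz

theorem σy_mul_σx_mul_σy : σy * σx * σy = -σx := by
  ext i j
  fin_cases i <;> fin_cases j <;> simp [σy, σx, Matrix.mul_apply, Fin.sum_univ_two]

theorem σy_mul_σz_mul_σy : σy * σz * σy = -σz := by
  ext i j
  fin_cases i <;> fin_cases j <;> simp [σy, σz, Matrix.mul_apply, Fin.sum_univ_two]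

theorem σy_mul_xzObs_mul_σy (γ : ℝ) : σy * xzObs γ * σy = -xzObs γ := by
  simp only [xzObs, Matrix.mul_add, Matrix.add_mul, Matrix.mul_smul, Matrix.smul_mul,
    σy_mul_σx_mul_σy, σy_mul_σz_mul_σy, smul_neg, neg_add]

theorem YY_mul_kronecker_mul_YY {A B : M2} (hA : σy * A * σy = -A) (hB : σy * B * σy = -B) :
    YY * (A ⊗ₖ B) * YY = A ⊗ₖ B := by
  rw [YY, ← mul_kronecker_mul, ← mul_kronecker_mul, hA, hB]
  ext p q
  simp [kroneckerMap_apply]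

theorem Matrix.trace_conj_mul_of_conj_eq {n R : Type*} [Fintype n] [CommSemiring R]
    {U X : Matrix n n R} (ρ : Matrix n n R) (h : U * X * U = X) :
    (U * ρ * U * X).trace = (ρ * X).trace := by
  calc (U * ρ * U * X).trace = (U * X * (U * ρ)).trace := by
        rw [Matrix.mul_assoc (U * ρ), trace_mul_comm]
    _ = (U * X * U * ρ).trace := by rw [Matrix.mul_assoc (U * X)]
    _ = (ρ * X).trace := by rw [h, trace_mul_comm]

theorem BellValue_eq (ρ : M4) (α : ℝ) (A0 A1 B0 B1 : M2) :
    BellValue ρ α A0 A1 B0 B1 =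
      α * ((ρ * (A0 ⊗ₖ B0)).trace + (ρ * (A0 ⊗ₖ B1)).trace)
        + (ρ * (A1 ⊗ₖ B0)).trace - (ρ * (A1 ⊗ₖ B1)).trace := by
  simp only [BellValue, Sop, Matrix.mul_sub, Matrix.mul_add, Matrix.mul_smul, trace_sub,
    trace_add, trace_smul, smul_eq_mul]

theorem sigmaYY_invariant_general (ρ : M4) :
    (∀ a b : ℝ, ((YY * ρ * YY) * (xzObs a ⊗ₖ xzObs b)).trace
        = (ρ * (xzObs a ⊗ₖ xzObs b)).trace) ∧
    (∀ (α a0 a1 b0 b1 : ℝ),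
        BellValue ((1 / 2 : ℂ) • (ρ + YY * ρ * YY)) α
            (xzObs a0) (xzObs a1) (xzObs b0) (xzObs b1)
          = BellValue ρ α (xzObs a0) (xzObs a1) (xzObs b0) (xzObs b1)) := by
  have correlator_invariant (a b : ℝ) :
      ((YY * ρ * YY) * (xzObs a ⊗ₖ xzObs b)).trace = (ρ * (xzObs a ⊗ₖ xzObs b)).trace :=
    Matrix.trace_conj_mul_of_conj_eq ρ <|
      YY_mul_kronecker_mul_YY (σy_mul_xzObs_mul_σy a) (σy_mul_xzObs_mul_σy b)
  refine ⟨correlator_invariant, fun α a0 a1 b0 b1 => ?_⟩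
  simp only [BellValue_eq, Matrix.smul_mul, Matrix.add_mul, trace_smul, trace_add,
    correlator_invariant, smul_eq_mul]
  ring

/-- Conjugating a two-qubit state by `σy⊗σy` leaves all correlators of x–z plane
observables invariant; consequently `(ρ + (σy⊗σy)ρ(σy⊗σy))/2` has the same α-CHSH value
as `ρ` for any x–z plane measurements. -/
theorem sigmaYY_invariant (ρ : M4) (hρ : IsState ρ) :
    (∀ a b : ℝ, ((YY * ρ * YY) * (xzObs a ⊗ₖ xzObs b)).trace
        = (ρ * (xzObs a ⊗ₖ xzObs b)).trace) ∧
    (∀ (α a0 a1 b0 b1 : ℝ),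
        BellValue ((1 / 2 : ℂ) • (ρ + YY * ρ * YY)) α
            (xzObs a0) (xzObs a1) (xzObs b0) (xzObs b1)
          = BellValue ρ α (xzObs a0) (xzObs a1) (xzObs b0) (xzObs b1)) :=
  sigmaYY_invariant_general ρ
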